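/- Let G = E[∇∇ᵀ] and let U_A, U_B be orthogonal matrices. Define G_KFAC = (U_A⊗U_B)(S_A⊗S_B)(U_A⊗U_B)ᵀ for arbitrary diagonal matrices S_A, S_B, and G_EKFAC = (U_A⊗U_B) S* (U_A⊗U_B)ᵀ where S* is diagonal with S*_ii = E[((U_A⊗U_B)ᵀ∇)_i²]. Then ‖G − G_EKFAC‖_F ≤ ‖G − G_KFAC‖_F. -/
import Mathlib

open Matrix Kronecker BigOperators

/-- Frobenius norm of a real square matrix. -/
noncomputable def frob {α : Type*} [Fintype α] (M : Matrix α α ℝ) : ℝ :=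
  Real.sqrt (∑ i, ∑ j, (M i j) ^ 2)

lemma sumsq_eq_trace {n : Type*} [Fintype n] (A : Matrix n n ℝ) :
    ∑ i, ∑ j, A i j ^ 2 = Matrix.trace (Aᵀ * A) := by
  simp only [Matrix.trace, Matrix.diag, Matrix.mul_apply, Matrix.transpose_apply, sq]
  rw [Finset.sum_comm]

lemma frob_conj {n : Type*} [Fintype n] [DecidableEq n] (U M : Matrix n n ℝ)
    (h1 : Uᵀ * U = 1) : frob (U * M * Uᵀ) = frob M := by
  unfold frob
  congr 1
  rw [sumsq_eq_trace, sumsq_eq_trace]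
  have : (U * M * Uᵀ)ᵀ * (U * M * Uᵀ) = U * (Mᵀ * M * Uᵀ) := by
    simp only [Matrix.transpose_mul, Matrix.transpose_transpose, Matrix.mul_assoc]
    rw [show Uᵀ * (U * (M * Uᵀ)) = M * Uᵀ by rw [← Matrix.mul_assoc, h1, Matrix.one_mul]]
  rw [this, Matrix.trace_mul_comm, Matrix.mul_assoc, h1, Matrix.mul_one]

lemma conj_vecMulVec {n : Type*} [Fintype n] (U : Matrix n n ℝ) (g : n → ℝ) :
    Uᵀ * vecMulVec g g * U = vecMulVec (Uᵀ.mulVec g) (Uᵀ.mulVec g) := by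
  ext i j
  simp only [Matrix.mul_apply, Matrix.vecMulVec_apply, Matrix.mulVec, dotProduct,
    Matrix.transpose_apply, Finset.sum_mul, Finset.mul_sum]
  rw [Finset.sum_comm]
  conv_rhs => rw [Finset.sum_comm]
  apply Finset.sum_congr rfl; intro b _
  apply Finset.sum_congr rfl; intro a _
  ring

lemma kron_isDiag {dA dB : ℕ} {SA : Matrix (Fin dA) (Fin dA) ℝ}
    {SB : Matrix (Fin dB) (Fin dB) ℝ} (hSA : SA.IsDiag) (hSB : SB.IsDiag) :
    (SA ⊗ₖ SB).IsDiag := by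
  rintro ⟨a, b⟩ ⟨c, d⟩ h
  simp only [Matrix.kroneckerMap_apply]
  by_cases hac : a = c
  · subst hac
    have : b ≠ d := by rintro rfl; exact h rfl
    rw [hSB this, mul_zero]
  · rw [hSA hac, zero_mul]

theorem ekfac_stmt8 {dA dB m : ℕ} (hm : 0 < m)
    (UA SA : Matrix (Fin dA) (Fin dA) ℝ)
    (UB SB : Matrix (Fin dB) (Fin dB) ℝ)
    (G : Matrix (Fin dA × Fin dB) (Fin dA × Fin dB) ℝ)
    (grad : Fin m → (Fin dA × Fin dB → ℝ))
    (hUA : UAᵀ * UA = 1) (hUA' : UA * UAᵀ = 1)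
    (hUB : UBᵀ * UB = 1) (hUB' : UB * UBᵀ = 1)
    (hSA : SA.IsDiag) (hSB : SB.IsDiag)
    (hG : G = (m : ℝ)⁻¹ • ∑ k, vecMulVec (grad k) (grad k)) :
    frob (G - (UA ⊗ₖ UB) * Matrix.diagonal
        (fun i => (m : ℝ)⁻¹ * ∑ k, (((UA ⊗ₖ UB)ᵀ).mulVec (grad k) i) ^ 2)
        * (UA ⊗ₖ UB)ᵀ)
      ≤ frob (G - (UA ⊗ₖ UB) * (SA ⊗ₖ SB) * (UA ⊗ₖ UB)ᵀ) := by
  set U : Matrix (Fin dA × Fin dB) (Fin dA × Fin dB) ℝ := UA ⊗ₖ UB with hU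
  have hUt : Uᵀ = UAᵀ ⊗ₖ UBᵀ := by
    simp [hU, Matrix.kroneckerMap_transpose]
  have h1 : Uᵀ * U = 1 := by
    rw [hUt, hU, ← Matrix.mul_kronecker_mul, hUA, hUB, Matrix.one_kronecker_one]
  have h1' : U * Uᵀ = 1 := by
    rw [hUt, hU, ← Matrix.mul_kronecker_mul, hUA', hUB', Matrix.one_kronecker_one]
  -- rewrite G - U D Uᵀ = U (UᵀGU - D) Uᵀ
  have hrw : ∀ D : Matrix (Fin dA × Fin dB) (Fin dA × Fin dB) ℝ,
      G - U * D * Uᵀ = U * (Uᵀ * G * U - D) * Uᵀ := by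
    intro D
    rw [Matrix.mul_sub, Matrix.sub_mul]
    congr 1
    simp only [Matrix.mul_assoc]
    rw [h1', Matrix.mul_one, ← Matrix.mul_assoc, h1', Matrix.one_mul]
  set M := Uᵀ * G * U with hM
  have hdiag : ∀ i, M i i = (m : ℝ)⁻¹ * ∑ k, ((Uᵀ).mulVec (grad k) i) ^ 2 := by
    intro i
    have : M = (m : ℝ)⁻¹ • ∑ k, vecMulVec (Uᵀ.mulVec (grad k)) (Uᵀ.mulVec (grad k)) := by
      rw [hM, hG]
      simp only [Matrix.mul_smul, Matrix.smul_mul, Matrix.mul_sum, Matrix.sum_mul]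
      congr 1
      exact Finset.sum_congr rfl fun k _ => conj_vecMulVec U (grad k)
    rw [this]
    simp only [Matrix.smul_apply, Matrix.sum_apply, Matrix.vecMulVec_apply, smul_eq_mul, sq]
  rw [hrw, hrw, frob_conj _ _ h1, frob_conj _ _ h1]
  -- pointwise comparison
  unfold frob
  apply Real.sqrt_le_sqrt
  apply Finset.sum_le_sum
  intro i _
  apply Finset.sum_le_sum
  intro j _
  by_cases hij : i = j
  · subst hij
    have : (M - Matrix.diagonal
        (fun i => (m : ℝ)⁻¹ * ∑ k, ((Uᵀ).mulVec (grad k) i) ^ 2)) i i = 0 := by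
      simp [Matrix.sub_apply, Matrix.diagonal_apply_eq, hdiag i]
    rw [this]
    simpa using sq_nonneg _
  · have hD2 : (SA ⊗ₖ SB) i j = 0 := kron_isDiag hSA hSB hij
    simp only [Matrix.kroneckerMap_apply] at hD2
    simp [Matrix.sub_apply, Matrix.diagonal_apply_ne _ hij, hD2]
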